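/- Let (Δ_k)_{k≥0} be the atoms of a Poisson point process on ℝ with intensity measure e^x dx, and let β > 1. Then Σ_{k≥0} e^{-βΔ_k} is almost surely finite and strictly positive, and the normalized weights ( e^{-βΔ_k} / Σ_j e^{-βΔ_j} )_{k≥0}, arranged in decreasing order, have the Poisson–Dirichlet distribution with parameters (1/β, 0). -/

import Mathlib

open MeasureTheory ProbabilityTheory Real
open scoped ProbabilityTheory ENNReal NNReal

noncomputable section

variable {Ω : Type*}

/-- Number of atoms of the point process `Δ` lying in the set `A`. -/
def ppCount (Δ : ℕ → Ω → ℝ) (A : Set ℝ) (ω : Ω) : ℝ≥0∞ :=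
  ∑' k : ℕ, A.indicator (fun _ => (1 : ℝ≥0∞)) (Δ k ω)

/-- `Δ` enumerates the atoms of a Poisson point process on `ℝ` with intensity measure `μ`:
for each measurable `A` of finite intensity, the number of atoms in `A` is Poisson distributed
with parameter `μ(A)`, and the counts over finitely many pairwise disjoint sets are
independent. -/
def IsPoissonPP [MeasureSpace Ω] (Δ : ℕ → Ω → ℝ) (μ : Measure ℝ) : Prop :=
  (∀ k, Measurable (Δ k)) ∧
  (∀ A : Set ℝ, MeasurableSet A → μ A < ⊤ → ∀ n : ℕ,
    (ℙ : Measure Ω) {ω | ppCount Δ A ω = n}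
      = ENNReal.ofReal (poissonPMFReal (μ A).toNNReal n)) ∧
  (∀ (m : ℕ) (A : Fin m → Set ℝ), (∀ i, MeasurableSet (A i)) →
    Pairwise (Function.onFun Disjoint A) →
    iIndepFun (fun i ω => ppCount Δ (A i) ω) (ℙ : Measure Ω))

/-- The intensity measure `e^x dx` on `ℝ`. -/
def expIntensity : Measure ℝ :=
  volume.withDensity fun x => ENNReal.ofReal (Real.exp x)

/-- The intensity measure `α x^{-α-1} dx` on `(0,∞)` of the jumps of an `α`-stable
subordinator. -/
def stableIntensity (α : ℝ) : Measure ℝ :=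
  volume.withDensity fun x => if 0 < x then ENNReal.ofReal (α * x ^ (-α - 1)) else 0

/-- `(p_k)` has the Poisson–Dirichlet distribution with parameters `(α, 0)`: its law is that of
the decreasing sequence of normalized jumps of an `α`-stable subordinator, i.e. of the
decreasing enumeration of the normalized atoms of a Poisson point process with intensity
`α x^{-α-1} dx` on `(0,∞)`. -/
def IsPoissonDirichlet [MeasureSpace Ω] (α : ℝ) (p : ℕ → Ω → ℝ) : Prop :=
  ∃ (Ω' : Type) (_ : MeasureSpace Ω') (_ : IsProbabilityMeasure (ℙ : Measure Ω'))
      (J : ℕ → Ω' → ℝ),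
    IsPoissonPP J (stableIntensity α) ∧
    (∀ ω', Antitone fun k => J k ω') ∧
    Measure.map (fun ω' (k : ℕ) => J k ω' / ∑' j : ℕ, J j ω') (ℙ : Measure Ω')
      = Measure.map (fun ω (k : ℕ) => p k ω) (ℙ : Measure Ω)

end

/-! The substitution `y = e^{-βx}` turns the intensity `e^x dx` into `(1/β) y^{-1/β-1} dy` on
`(0, ∞)`, so the weights `e^{-βΔ_k}` are the atoms of the Poisson process of jumps of a
`1/β`-stable subordinator; normalising and ordering them gives `PD(1/β, 0)` by definition.
The weights are a.s. summable because only finitely many atoms lie below `0` (their expected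
number is `∫_{-∞}^0 e^x dx = 1`), while the atoms in `[n, n+1)` contribute at most `e^{-βn}` each
and have expected number at most `e^{n+1}`, and `∑ₙ e^{-βn} e^{n+1} < ∞` for `β > 1`. -/

open Set Filter

section Counting

variable {Ω : Type*}

lemma ppCount_eq_encard (Δ : ℕ → Ω → ℝ) (A : Set ℝ) (ω : Ω) :
    ppCount Δ A ω = ({k | Δ k ω ∈ A}.encard : ℝ≥0∞) := by
  rw [← ENNReal.tsum_set_one, tsum_subtype _ fun _ => (1 : ℝ≥0∞)]
  rfl

lemma ppCount_eq_of_perm {Δ Δ' : ℕ → Ω → ℝ} {ω : Ω} (σ : ℕ ≃ ℕ)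
    (h : ∀ k, Δ' k ω = Δ (σ k) ω) (A : Set ℝ) : ppCount Δ' A ω = ppCount Δ A ω := by
  simp only [ppCount, h]
  exact σ.tsum_eq fun k => A.indicator (fun _ => (1 : ℝ≥0∞)) (Δ k ω)

lemma measurable_ppCount [MeasurableSpace Ω] {Δ : ℕ → Ω → ℝ} (hΔ : ∀ k, Measurable (Δ k))
    {A : Set ℝ} (hA : MeasurableSet A) : Measurable (ppCount Δ A) :=
  Measurable.tsum fun k => (measurable_const.indicator hA).comp (hΔ k)

lemma Antitone.lt_iff_lt_encard {p : ℕ → ℝ} (hp : Antitone p) (t : ℝ) (k : ℕ) :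
    t < p k ↔ (k : ℕ∞) < {j | t < p j}.encard := by
  constructor
  · intro ht
    calc (k : ℕ∞) < (Iic k).encard := by
          rw [← Finset.coe_Iic, encard_coe_eq_coe_finsetCard, Nat.card_Iic]
          exact_mod_cast k.lt_succ_self
      _ ≤ _ := encard_le_encard fun j hj => ht.trans_le (hp hj)
  · intro hk
    by_contra! hpk
    have : {j | t < p j} ⊆ Iio k := fun j hj =>
      lt_of_not_ge fun hkj => (hp hkj).not_gt (hpk.trans_lt hj)
    refine (encard_le_encard this).not_gt ?_
    rwa [← Finset.coe_Iio, encard_coe_eq_coe_finsetCard, Nat.card_Iio]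

lemma measurable_of_antitone_rearrangement [MeasurableSpace Ω] {Y p : ℕ → Ω → ℝ}
    (hY : ∀ j, Measurable (Y j)) (hp : ∀ ω, Antitone fun k => p k ω)
    (hpY : ∀ ω, ∃ σ : ℕ ≃ ℕ, ∀ k, p k ω = Y (σ k) ω) (k : ℕ) : Measurable (p k) := by
  refine measurable_of_Ioi fun t => ?_
  -- `t < p k` iff more than `k` of the `Y j` exceed `t`, which does not involve `σ`.
  have hpre : p k ⁻¹' Ioi t = {ω | (k : ℝ≥0∞) < ppCount Y (Ioi t) ω} := by
    ext ω
    obtain ⟨σ, hσ⟩ := hpY ω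
    rw [mem_preimage, mem_Ioi, (hp ω).lt_iff_lt_encard, mem_ofPred_eq,
      ← ppCount_eq_of_perm σ hσ, ppCount_eq_encard, ← ENat.toENNReal_coe, ENat.toENNReal_lt]
    rfl
  rw [hpre]
  exact measurableSet_lt measurable_const (measurable_ppCount hY measurableSet_Ioi)

end Counting

section PoissonMean

lemma tsum_ofReal_poissonPMFReal (r : ℝ≥0) :
    ∑' n : ℕ, ENNReal.ofReal (poissonPMFReal r n) = 1 := by
  rw [← ENNReal.ofReal_tsum_of_nonneg (fun _ => poissonPMFReal_nonneg)
    (hasSum_one_poissonMeasure r).summable, ← ENNReal.ofReal_one]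
  exact congrArg ENNReal.ofReal (hasSum_one_poissonMeasure r).tsum_eq

lemma tsum_natCast_mul_ofReal_poissonPMFReal (r : ℝ≥0) :
    ∑' n : ℕ, (n : ℝ≥0∞) * ENNReal.ofReal (poissonPMFReal r n) = r := by
  have hshift (n : ℕ) : ((n + 1 : ℕ) : ℝ≥0∞) * ENNReal.ofReal (poissonPMFReal r (n + 1))
      = r * ENNReal.ofReal (poissonPMFReal r n) := by
    have h : ((n + 1 : ℕ) : ℝ) * poissonPMFReal r (n + 1) = r * poissonPMFReal r n := by
      simp only [poissonPMFReal, Nat.factorial_succ]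
      push_cast
      field_simp
      ring
    rw [← ENNReal.ofReal_natCast, ← ENNReal.ofReal_mul (by positivity), h,
      ENNReal.ofReal_mul r.coe_nonneg, ENNReal.ofReal_coe_nnreal]
  rw [tsum_eq_zero_add' ENNReal.summable, Nat.cast_zero, zero_mul, zero_add,
    tsum_congr hshift, ENNReal.tsum_mul_left, tsum_ofReal_poissonPMFReal, mul_one]

variable {Ω : Type*} [MeasurableSpace Ω] {μ : Measure Ω} [IsProbabilityMeasure μ]

lemma lintegral_eq_of_measure_eq_poissonPMFReal {N : Ω → ℝ≥0∞} (hN : Measurable N) {r : ℝ≥0}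
    (h : ∀ n : ℕ, μ {ω | N ω = n} = ENNReal.ofReal (poissonPMFReal r n)) :
    ∫⁻ ω, N ω ∂μ = r := by
  have hmeas (n : ℕ) : MeasurableSet {ω | N ω = n} := hN (measurableSet_singleton _)
  have hdisj : Pairwise (Function.onFun Disjoint fun n : ℕ => {ω | N ω = n}) :=
    fun i j hij => disjoint_left.mpr fun ω hi hj => hij (Nat.cast_injective (hi.symm.trans hj))
  have hfull : ∀ᵐ ω ∂μ, ω ∈ ⋃ n : ℕ, {ω | N ω = n} := by
    rw [ae_iff, ← compl_def, measure_compl (MeasurableSet.iUnion hmeas) (measure_ne_top _ _),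
      measure_iUnion hdisj hmeas, tsum_congr h, tsum_ofReal_poissonPMFReal, measure_univ,
      tsub_self]
  calc ∫⁻ ω, N ω ∂μ = ∫⁻ ω in ⋃ n : ℕ, {ω | N ω = n}, N ω ∂μ := by
        rw [Measure.restrict_eq_self_of_ae_mem hfull]
    _ = ∑' n : ℕ, (n : ℝ≥0∞) * ENNReal.ofReal (poissonPMFReal r n) := by
        rw [lintegral_iUnion hmeas hdisj]
        refine tsum_congr fun n => ?_
        rw [setLIntegral_congr_fun (hmeas n) fun ω hω => hω, setLIntegral_const, h n]
    _ = r := tsum_natCast_mul_ofReal_poissonPMFReal r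

end PoissonMean

lemma iIndepFun_map_of_comp {Ω Ω' ι : Type*} [MeasurableSpace Ω] [MeasurableSpace Ω']
    {μ : Measure Ω} {G : Ω → Ω'} (hG : Measurable G) {β : ι → Type*}
    [∀ i, MeasurableSpace (β i)] {f : ∀ i, Ω' → β i} (hf : ∀ i, Measurable (f i))
    (h : iIndepFun (fun i => f i ∘ G) μ) : iIndepFun f (μ.map G) := by
  rw [iIndepFun_iff_measure_inter_preimage_eq_mul]
  intro S sets hsets
  rw [Measure.map_apply hG (Finset.measurableSet_biInter S fun i hi => hf i (hsets i hi)),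
    preimage_iInter₂]
  refine (h.measure_inter_preimage_eq_mul S hsets).trans ?_
  exact Finset.prod_congr rfl fun i hi => (Measure.map_apply hG (hf i (hsets i hi))).symm

namespace IsPoissonPP

variable {Ω : Type*} [MeasureSpace Ω] {Δ : ℕ → Ω → ℝ} {μ : Measure ℝ}

lemma lintegral_ppCount [IsProbabilityMeasure (ℙ : Measure Ω)] (hΔ : IsPoissonPP Δ μ)
    {A : Set ℝ} (hA : MeasurableSet A) (hμA : μ A < ⊤) : ∫⁻ ω, ppCount Δ A ω = μ A := by
  rw [lintegral_eq_of_measure_eq_poissonPMFReal (measurable_ppCount hΔ.1 hA) (hΔ.2.1 A hA hμA),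
    ENNReal.coe_toNNReal hμA.ne]

lemma ae_finite [IsProbabilityMeasure (ℙ : Measure Ω)] (hΔ : IsPoissonPP Δ μ)
    {A : Set ℝ} (hA : MeasurableSet A) (hμA : μ A < ⊤) : ∀ᵐ ω, {k | Δ k ω ∈ A}.Finite := by
  have hint : ∫⁻ ω, ppCount Δ A ω ≠ ⊤ := by rw [hΔ.lintegral_ppCount hA hμA]; exact hμA.ne
  filter_upwards [ae_lt_top (measurable_ppCount hΔ.1 hA) hint] with ω hω
  rw [ppCount_eq_encard, ← ENat.toENNReal_top, ENat.toENNReal_lt, lt_top_iff_ne_top] at hω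
  exact encard_ne_top_iff.mp hω

lemma lintegral_tsum_mul_ppCount [IsProbabilityMeasure (ℙ : Measure Ω)] (hΔ : IsPoissonPP Δ μ)
    (c : ℕ → ℝ≥0∞) {A : ℕ → Set ℝ} (hA : ∀ n, MeasurableSet (A n)) (hμA : ∀ n, μ (A n) < ⊤) :
    ∫⁻ ω, ∑' n, c n * ppCount Δ (A n) ω = ∑' n, c n * μ (A n) := by
  rw [lintegral_tsum fun n => ((measurable_ppCount hΔ.1 (hA n)).const_mul _).aemeasurable]
  refine tsum_congr fun n => ?_
  rw [lintegral_const_mul _ (measurable_ppCount hΔ.1 (hA n)), hΔ.lintegral_ppCount (hA n) (hμA n)]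

protected lemma comp (hΔ : IsPoissonPP Δ μ) {T : ℝ → ℝ} (hT : Measurable T) :
    IsPoissonPP (fun k ω => T (Δ k ω)) (μ.map T) := by
  refine ⟨fun k => hT.comp (hΔ.1 k), fun A hA hμA n => ?_, fun m A hA hdisj => ?_⟩
  · rw [Measure.map_apply hT hA] at hμA ⊢
    exact hΔ.2.1 _ (hT hA) hμA n
  · exact hΔ.2.2 m (fun i => T ⁻¹' A i) (fun i => hT (hA i))
      fun i j hij => (hdisj hij).preimage T

lemma congr_ae (hΔ : IsPoissonPP Δ μ) {Δ' : ℕ → Ω → ℝ} (hΔ' : ∀ k, Measurable (Δ' k))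
    (hcount : ∀ A, ppCount Δ' A =ᵐ[ℙ] ppCount Δ A) : IsPoissonPP Δ' μ := by
  refine ⟨hΔ', fun A hA hμA n => ?_, fun m A hA hdisj => ?_⟩
  · rw [← hΔ.2.1 A hA hμA n]
    refine measure_congr <| eventuallyEq_set.mpr <| (hcount A).mono fun ω hω => ?_
    rw [mem_ofPred_eq, mem_ofPred_eq, hω]
  · exact (hΔ.2.2 m A hA hdisj).congr fun i => (hcount (A i)).symm

lemma of_comp {Ω' : Type*} [MeasureSpace Ω'] {G : Ω → Ω'} (hG : Measurable G)
    (hℙ : (ℙ : Measure Ω') = (ℙ : Measure Ω).map G) {J : ℕ → Ω' → ℝ}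
    (hJ : ∀ k, Measurable (J k)) (h : IsPoissonPP (fun k ω => J k (G ω)) μ) :
    IsPoissonPP J μ := by
  refine ⟨hJ, fun A hA hμA n => ?_, fun m A hA hdisj => ?_⟩
  · have hs : MeasurableSet {ω | ppCount J A ω = n} :=
      measurable_ppCount hJ hA (measurableSet_singleton _)
    rw [hℙ, Measure.map_apply hG hs]
    exact h.2.1 A hA hμA n
  · rw [hℙ]
    exact iIndepFun_map_of_comp hG (fun i => measurable_ppCount hJ (hA i)) (h.2.2 m A hA hdisj)

end IsPoissonPP

lemma expIntensity_Iic (a : ℝ) : expIntensity (Iic a) = ENNReal.ofReal (exp a) := by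
  rw [expIntensity, withDensity_apply _ measurableSet_Iic, ← integral_exp_Iic,
    ofReal_integral_eq_lintegral_ofReal (integrableOn_exp_Iic a)
      (ae_of_all _ fun x => (exp_pos x).le)]

lemma stableIntensity_apply (α : ℝ) {A : Set ℝ} (hA : MeasurableSet A) :
    stableIntensity α A = ∫⁻ y in A ∩ Ioi 0, ENNReal.ofReal (α * y ^ (-α - 1)) := by
  have hdens : (fun y : ℝ => if 0 < y then ENNReal.ofReal (α * y ^ (-α - 1)) else 0)
      = (Ioi 0).indicator fun y => ENNReal.ofReal (α * y ^ (-α - 1)) := by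
    ext y
    simp [indicator_apply]
  rw [stableIntensity, withDensity_apply _ hA, hdens, lintegral_indicator measurableSet_Ioi,
    Measure.restrict_restrict measurableSet_Ioi, inter_comm]

lemma map_exp_neg_mul_expIntensity {β : ℝ} (hβ : 0 < β) :
    expIntensity.map (fun x => exp (-β * x)) = stableIntensity (1 / β) := by
  set T : ℝ → ℝ := fun x => exp (-β * x)
  have hT : Measurable T := by fun_prop
  ext A hA
  have hs : MeasurableSet (T ⁻¹' A) := hT hA
  have himage : T '' (T ⁻¹' A) = A ∩ Ioi 0 := by
    have hrange : range T = Ioi 0 := by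
      refine (range_subset_iff.mpr fun x => exp_pos _).antisymm fun y (hy : 0 < y) => ?_
      refine ⟨-log y / β, ?_⟩
      simp only [neg_mul, mul_div_cancel₀ _ hβ.ne', neg_neg, exp_log hy]
    rw [image_preimage_eq_inter_range, hrange]
  have hderiv (x : ℝ) : HasDerivAt T (-β * T x) x := by
    simpa [T, mul_comm] using ((hasDerivAt_id x).const_mul (-β)).exp
  have hinj : InjOn T (T ⁻¹' A) := fun x _ y _ hxy => by
    simpa [T, hβ.ne'] using hxy
  have hdensity (x : ℝ) :
      ENNReal.ofReal |-β * T x| * ENNReal.ofReal (1 / β * T x ^ (-(1 / β) - 1))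
        = ENNReal.ofReal (exp x) := by
    rw [← ENNReal.ofReal_mul (abs_nonneg _)]
    congr 1
    rw [abs_mul, abs_neg, abs_of_pos hβ, abs_of_pos (exp_pos _), ← exp_mul, mul_mul_mul_comm,
      mul_one_div_cancel hβ.ne', one_mul, ← exp_add]
    congr 1
    field_simp
    ring
  rw [Measure.map_apply hT hA, stableIntensity_apply _ hA, ← himage,
    lintegral_image_eq_lintegral_abs_deriv_mul hs (fun x _ => (hderiv x).hasDerivWithinAt) hinj,
    expIntensity, withDensity_apply _ hs]
  simp_rw [hdensity]

lemma ofReal_exp_neg_mul_le_tsum_indicator_Ico {β x : ℝ} (hβ : 0 ≤ β) (hx : 0 ≤ x) :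
    ENNReal.ofReal (exp (-β * x))
      ≤ ∑' n : ℕ, ENNReal.ofReal (exp (-β * n))
          * (Ico (n : ℝ) (n + 1)).indicator (fun _ => (1 : ℝ≥0∞)) x := by
  refine le_trans ?_ (ENNReal.le_tsum ⌊x⌋₊)
  have hmem : x ∈ Ico (⌊x⌋₊ : ℝ) (⌊x⌋₊ + 1) := ⟨Nat.floor_le hx, Nat.lt_floor_add_one x⟩
  rw [indicator_of_mem hmem, mul_one]
  exact ENNReal.ofReal_le_ofReal (exp_le_exp.mpr (by nlinarith [Nat.floor_le hx]))

lemma summable_exp_neg_mul_of_ppCount {Ω : Type*} {Δ : ℕ → Ω → ℝ} {ω : Ω} {β : ℝ} (hβ : 0 ≤ β)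
    (hneg : {k | Δ k ω ∈ Iio 0}.Finite)
    (hbands : ∑' n : ℕ, ENNReal.ofReal (exp (-β * n)) * ppCount Δ (Ico (n : ℝ) (n + 1)) ω ≠ ⊤) :
    Summable fun k => exp (-β * Δ k ω) := by
  rw [← hneg.summable_compl_iff]
  have hle : ∑' k : ↥{k | Δ k ω ∈ Iio 0}ᶜ, ENNReal.ofReal (exp (-β * Δ k ω))
      ≤ ∑' n : ℕ, ENNReal.ofReal (exp (-β * n)) * ppCount Δ (Ico (n : ℝ) (n + 1)) ω :=
    calc _ ≤ ∑' k : ↥{k | Δ k ω ∈ Iio 0}ᶜ, ∑' n : ℕ, ENNReal.ofReal (exp (-β * n))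
              * (Ico (n : ℝ) (n + 1)).indicator (fun _ => (1 : ℝ≥0∞)) (Δ k ω) :=
          ENNReal.tsum_le_tsum fun k => ofReal_exp_neg_mul_le_tsum_indicator_Ico hβ (not_lt.mp k.2)
      _ ≤ ∑' k : ℕ, ∑' n : ℕ, ENNReal.ofReal (exp (-β * n))
              * (Ico (n : ℝ) (n + 1)).indicator (fun _ => (1 : ℝ≥0∞)) (Δ k ω) :=
          ENNReal.tsum_comp_le_tsum_of_injective Subtype.val_injective _
      _ = _ := by
          rw [ENNReal.tsum_comm]
          simp only [ppCount, ENNReal.tsum_mul_left]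
  simpa [Function.comp_def, ENNReal.toReal_ofReal (exp_pos _).le] using
    ENNReal.summable_toReal (ne_top_of_le_ne_top hbands hle)

lemma tsum_ofReal_exp_neg_mul_mul_exp_ne_top {β : ℝ} (hβ : 1 < β) :
    ∑' n : ℕ, ENNReal.ofReal (exp (-β * n)) * ENNReal.ofReal (exp (n + 1)) ≠ ⊤ := by
  have hterm (n : ℕ) : ENNReal.ofReal (exp (-β * n)) * ENNReal.ofReal (exp (n + 1))
      = ENNReal.ofReal (exp 1) * ENNReal.ofReal (exp (1 - β)) ^ n := by
    rw [← ENNReal.ofReal_mul (exp_pos _).le, ← ENNReal.ofReal_pow (exp_pos _).le,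
      ← ENNReal.ofReal_mul (exp_pos _).le, ← exp_nat_mul, ← exp_add, ← exp_add]
    congr 2
    ring
  rw [tsum_congr hterm, ENNReal.tsum_mul_left, ENNReal.tsum_geometric]
  refine ENNReal.mul_ne_top ENNReal.ofReal_ne_top (ENNReal.inv_ne_top.mpr ?_)
  refine (tsub_pos_of_lt ?_).ne'
  rw [← ENNReal.ofReal_one, ENNReal.ofReal_lt_ofReal_iff one_pos]
  exact exp_lt_one_iff.mpr (by linarith)

lemma IsPoissonPP.ae_summable_exp_neg_mul {Ω : Type*} [MeasureSpace Ω]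
    [IsProbabilityMeasure (ℙ : Measure Ω)] {Δ : ℕ → Ω → ℝ} (hΔ : IsPoissonPP Δ expIntensity)
    {β : ℝ} (hβ : 1 < β) : ∀ᵐ ω, Summable fun k => exp (-β * Δ k ω) := by
  have hband (n : ℕ) : expIntensity (Ico (n : ℝ) (n + 1)) ≤ ENNReal.ofReal (exp (n + 1)) :=
    (measure_mono (Ico_subset_Iio_self.trans Iio_subset_Iic_self)).trans_eq (expIntensity_Iic _)
  have hbands : ∫⁻ ω, ∑' n : ℕ, ENNReal.ofReal (exp (-β * n))
      * ppCount Δ (Ico (n : ℝ) (n + 1)) ω ≠ ⊤ := by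
    rw [hΔ.lintegral_tsum_mul_ppCount _ (fun _ => measurableSet_Ico)
      fun n => (hband n).trans_lt ENNReal.ofReal_lt_top]
    exact ne_top_of_le_ne_top (tsum_ofReal_exp_neg_mul_mul_exp_ne_top hβ)
      (ENNReal.tsum_le_tsum fun n => mul_le_mul_right (hband n) _)
  have hneg : expIntensity (Iio 0) < ⊤ :=
    (measure_mono Iio_subset_Iic_self).trans_lt
      ((expIntensity_Iic 0).trans_lt ENNReal.ofReal_lt_top)
  filter_upwards [hΔ.ae_finite measurableSet_Iio hneg,
    ae_lt_top (Measurable.tsum fun n =>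
      (measurable_ppCount hΔ.1 measurableSet_Ico).const_mul _) hbands] with ω hfin hω
  exact summable_exp_neg_mul_of_ppCount (by linarith) hfin hω.ne

/-- The witness is the space of antitone sequences with the law of `ω ↦ (∑ⱼ Xⱼ ω) • p ω`: almost
surely this is a reordering of the atoms `X · ω`, so its coordinates are again a Poisson point
process with intensity `stableIntensity α`. -/
theorem isPoissonDirichlet_of_rearrangement {Ω : Type*} [MeasureSpace Ω]
    [IsProbabilityMeasure (ℙ : Measure Ω)] {α : ℝ} {X : ℕ → Ω → ℝ}
    (hX : IsPoissonPP X (stableIntensity α)) (hX0 : ∀ k ω, 0 ≤ X k ω)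
    (hS : ∀ᵐ ω, 0 < ∑' j, X j ω) {p : ℕ → Ω → ℝ} (hp : ∀ ω, Antitone fun k => p k ω)
    (hpX : ∀ ω, ∃ σ : ℕ ≃ ℕ, ∀ k, p k ω = X (σ k) ω / ∑' j, X j ω) :
    IsPoissonDirichlet α p := by
  set S : Ω → ℝ := fun ω => ∑' j, X j ω
  have hS_meas : Measurable S := Measurable.tsum hX.1
  have hp_meas : ∀ k, Measurable (p k) :=
    measurable_of_antitone_rearrangement (fun j => (hX.1 j).div hS_meas) hp hpX
  let G : Ω → {f : ℕ → ℝ // Antitone f} := fun ω =>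
    ⟨fun k => S ω * p k ω, fun _ _ hij => mul_le_mul_of_nonneg_left (hp ω hij)
      (tsum_nonneg fun j => hX0 j ω)⟩
  have hG : Measurable G := (measurable_pi_lambda _ fun k => hS_meas.mul (hp_meas k)).subtype_mk
  have hGX : ∀ᵐ ω, ∃ σ : ℕ ≃ ℕ, ∀ k, (G ω).1 k = X (σ k) ω ∧ p k ω = X (σ k) ω / S ω := by
    filter_upwards [hS] with ω hω
    obtain ⟨σ, hσ⟩ := hpX ω
    exact ⟨σ, fun k => ⟨by simp only [G, S, hσ k]; field_simp, hσ k⟩⟩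
  let P : MeasureSpace {f : ℕ → ℝ // Antitone f} := ⟨(ℙ : Measure Ω).map G⟩
  have hJ (k : ℕ) : Measurable fun f : {f : ℕ → ℝ // Antitone f} => f.1 k :=
    (measurable_pi_apply k).comp measurable_subtype_coe
  refine ⟨_, P, Measure.isProbabilityMeasure_map hG.aemeasurable, fun k f => f.1 k,
    ?_, fun f => f.2, ?_⟩
  · refine IsPoissonPP.of_comp hG rfl hJ (hX.congr_ae (fun k => (hJ k).comp hG) fun A => ?_)
    filter_upwards [hGX] with ω ⟨σ, hσ⟩
    exact ppCount_eq_of_perm σ (fun k => (hσ k).1) A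
  · have hnormalize : Measurable fun (f : {f : ℕ → ℝ // Antitone f}) (k : ℕ) =>
        f.1 k / ∑' j, f.1 j :=
      measurable_pi_lambda _ fun k => (hJ k).div (Measurable.tsum hJ)
    beta_reduce
    rw [show (ℙ : Measure {f : ℕ → ℝ // Antitone f}) = (ℙ : Measure Ω).map G from rfl,
      Measure.map_map hnormalize hG]
    refine Measure.map_congr ?_
    filter_upwards [hGX] with ω ⟨σ, hσ⟩
    funext k
    simp only [Function.comp_apply, (hσ k).1, (hσ k).2]
    rw [tsum_congr fun j => (hσ j).1, σ.tsum_eq fun j => X j ω]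

/-- For a Poisson point process `(Δ_k)` on `ℝ` with intensity `e^x dx` and `β > 1`,
`Σ_k e^{-β Δ_k}` is a.s. finite and strictly positive, and the normalized weights
`e^{-β Δ_k} / Σ_j e^{-β Δ_j}`, arranged in decreasing order, follow the Poisson–Dirichlet
distribution with parameters `(1/β, 0)`. -/
theorem stmt6 {Ω : Type*} [MeasureSpace Ω] [IsProbabilityMeasure (ℙ : Measure Ω)]
    (Δ : ℕ → Ω → ℝ) (hΔ : IsPoissonPP Δ expIntensity) (β : ℝ) (hβ : 1 < β) :
    (∀ᵐ ω ∂(ℙ : Measure Ω),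
      Summable (fun k => Real.exp (-β * Δ k ω)) ∧ 0 < ∑' k : ℕ, Real.exp (-β * Δ k ω)) ∧
    ∀ p : ℕ → Ω → ℝ,
      (∀ ω, Antitone fun k => p k ω) →
      (∀ ω, ∃ σ : ℕ ≃ ℕ, ∀ k,
        p k ω = Real.exp (-β * Δ (σ k) ω) / ∑' j : ℕ, Real.exp (-β * Δ j ω)) →
      IsPoissonDirichlet (1 / β) p := by
  have hsum : ∀ᵐ ω, Summable (fun k => exp (-β * Δ k ω)) ∧ 0 < ∑' k, exp (-β * Δ k ω) :=
    (hΔ.ae_summable_exp_neg_mul hβ).mono fun ω hω =>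
      ⟨hω, hω.tsum_pos (fun _ => (exp_pos _).le) 0 (exp_pos _)⟩
  refine ⟨hsum, fun p hp hpΔ => ?_⟩
  have hX : IsPoissonPP (fun k ω => exp (-β * Δ k ω)) (stableIntensity (1 / β)) := by
    rw [← map_exp_neg_mul_expIntensity (by linarith)]
    exact hΔ.comp (by fun_prop : Measurable fun x : ℝ => exp (-β * x))
  exact isPoissonDirichlet_of_rearrangement hX (fun _ _ => (exp_pos _).le)
    (hsum.mono fun _ h => h.2) hp hpΔ
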